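/- arXiv:2005.06254 — 3 statements merged into one kernel-verified Lean document; each statement's English description precedes it below -/
import Mathlib

section
/- Let x be an infinite word over an alphabet A, let N ≥ 2 and i ≥ 1, and let w₁ and w₂ be closed factors of x of length N with frontiers u₁ and u₂ respectively. If there exists a path from w₁ to w₂ in the Rauzy graph of order N of x consisting only of closed factors (equivalently, there exists a finite word z of length N + i such that w₁ is a prefix of z, w₂ is a suffix of z, every factor of z of length N + 1 is a factor of x, and every factor of z of length N is closed), then |u₁| = |u₂|. -/
/-- `w` occurs in the infinite word `x` at position `m`. -/
def OccursAt {A : Type*} (x : ℕ → A) (w : List A) (m : ℕ) : Prop :=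
  w = (List.range w.length).map fun i => x (m + i)

/-- `w` is a factor of the infinite word `x`. -/
def IsFactorOf {A : Type*} (x : ℕ → A) (w : List A) : Prop :=
  ∃ m, OccursAt x w m

/-- `w` is a recurrent factor of `x` : it occurs at infinitely many positions. -/
def IsRecurrentFactor {A : Type*} (x : ℕ → A) (w : List A) : Prop :=
  ∀ N, ∃ m, N ≤ m ∧ OccursAt x w m

/-- The set of positions at which `u` occurs inside the finite word `w`. -/
def occSet {A : Type*} (u w : List A) : Set ℕ := {i | u <+: w.drop i}

/-- `u` is a border of `w`: nonempty, strictly shorter than `w`,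
and both a prefix and a suffix of `w`. -/
def IsBorder {A : Type*} (u w : List A) : Prop :=
  0 < u.length ∧ u.length < w.length ∧ u <+: w ∧ u <:+ w

/-- A finite word is closed if it is a single letter or it has a border
occurring exactly twice in it. -/
def IsClosedWord {A : Type*} (w : List A) : Prop :=
  w.length = 1 ∨ ∃ u, IsBorder u w ∧ (occSet u w).ncard = 2

/-- A nonempty finite word is open if it is not closed. -/
def IsOpenWord {A : Type*} (w : List A) : Prop :=
  w ≠ [] ∧ ¬ IsClosedWord w

/-- The frontier of a closed word is its longest border. -/
def IsFrontier {A : Type*} (u w : List A) : Prop :=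
  IsBorder u w ∧ ∀ v, IsBorder v w → v.length ≤ u.length

/-- number of closed factors of `x` of length `n`. -/
noncomputable def clComp {A : Type*} (x : ℕ → A) (n : ℕ) : ℕ :=
  {w : List A | w.length = n ∧ IsFactorOf x w ∧ IsClosedWord w}.ncard

/-- number of open factors of `x` of length `n`. -/
noncomputable def opComp {A : Type*} (x : ℕ → A) (n : ℕ) : ℕ :=
  {w : List A | w.length = n ∧ IsFactorOf x w ∧ IsOpenWord w}.ncard

/-- `x` is ultimately periodic: `x = u v v v ⋯` for some `u`, `v` with `v` nonempty,
expressed via: every finite word `u v^n` is a prefix of `x`. -/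
def UltPeriodic {A : Type*} (x : ℕ → A) : Prop :=
  ∃ u v : List A, v ≠ [] ∧ ∀ n : ℕ, OccursAt x (u ++ (List.replicate n v).flatten) 0

/-- `S ⊆ ℕ` is syndetic with gaps smaller than `d`: `S ∩ [n, n+d] ≠ ∅` for all `n`. -/
def SyndeticWithGaps (S : Set ℕ) (d : ℕ) : Prop :=
  ∀ n : ℕ, ∃ m ∈ S, n ≤ m ∧ m ≤ n + d

/-- `S ⊆ ℕ` is syndetic. -/
def Syndetic (S : Set ℕ) : Prop :=
  ∃ d : ℕ, SyndeticWithGaps S d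


section FrontierAux
variable {A : Type*}

lemma mem_occSet_of_prefix {u w : List A} (h : u <+: w) : 0 ∈ occSet u w := by
  simpa [occSet] using h

lemma mem_occSet_of_suffix {u w : List A} (h : u <:+ w) :
    (w.length - u.length) ∈ occSet u w := by
  have := List.suffix_iff_eq_drop.mp h
  simp only [occSet, Set.mem_setOf_eq]
  rw [← this]

lemma occ_trans {s v w : List A} {i j : ℕ} (hs : s <+: v.drop j) (hv : v <+: w.drop i) :
    s <+: w.drop (i + j) := by
  have := (hv.drop j).trans (by rw [List.drop_drop])
  exact hs.trans this

lemma occ_lt {u w : List A} (hu : 0 < u.length) {i : ℕ} (h : i ∈ occSet u w) :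
    i + u.length ≤ w.length := by
  have h1 : u.length ≤ (w.drop i).length := h.length_le
  rw [List.length_drop] at h1
  omega

lemma occSet_finite (u w : List A) (hu : 0 < u.length) : (occSet u w).Finite := by
  apply (Set.finite_Iio w.length).subset
  intro i hi
  have := occ_lt hu hi
  simp only [Set.mem_Iio]; omega

lemma frontier_occSet {w u : List A} (hn : 2 ≤ w.length)
    (hc : IsClosedWord w) (hf : IsFrontier u w) :
    occSet u w = {0, w.length - u.length} := by
  obtain ⟨b, hb, hb2⟩ := hc.resolve_left (by omega)
  have hbu : b.length ≤ u.length := hf.2 b hb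
  have hupos : 0 < u.length := hf.1.1
  have hult : u.length < w.length := hf.1.2.1
  have hbpos : 0 < b.length := hb.1
  -- b is a prefix of u
  have hbprefu : b <+: u := List.prefix_of_prefix_length_le hb.2.2.1 hf.1.2.2.1 hbu
  -- show b.length = u.length
  have hblen : b.length = u.length := by
    by_contra hne
    have hblt : b.length < u.length := lt_of_le_of_ne hbu hne
    -- three occurrences of b in w
    have h0 : (0:ℕ) ∈ occSet b w := mem_occSet_of_prefix hb.2.2.1
    have h2 : (w.length - b.length) ∈ occSet b w := mem_occSet_of_suffix hb.2.2.2
    have h1 : (w.length - u.length) ∈ occSet b w := by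
      have hu2 : (w.length - u.length) ∈ occSet u w := mem_occSet_of_suffix hf.1.2.2.2
      have : b <+: w.drop (w.length - u.length + 0) := occ_trans (by simpa using hbprefu) hu2
      simpa [occSet] using this
    have hsub : ({0, w.length - u.length, w.length - b.length} : Set ℕ) ⊆ occSet b w := by
      intro t ht
      rcases ht with rfl | rfl | rfl
      · exact h0
      · exact h1
      · exact h2
    have hcard3 : ({0, w.length - u.length, w.length - b.length} : Set ℕ).ncard = 3 := by
      rw [Set.ncard_eq_three]
      exact ⟨_, _, _, by omega, by omega, by omega, rfl⟩
    have := Set.ncard_le_ncard hsub (occSet_finite b w hbpos)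
    omega
  have hbequ : b = u := hbprefu.eq_of_length hblen
  subst hbequ
  -- now occSet b w has ncard 2 and contains the two positions
  have h0 : (0:ℕ) ∈ occSet b w := mem_occSet_of_prefix hb.2.2.1
  have h2 : (w.length - b.length) ∈ occSet b w := mem_occSet_of_suffix hb.2.2.2
  have hsub : ({0, w.length - b.length} : Set ℕ) ⊆ occSet b w := by
    intro t ht
    rcases ht with rfl | rfl
    · exact h0
    · exact h2
  refine (Set.eq_of_subset_of_ncard_le hsub ?_ (occSet_finite b w hbpos)).symm
  rw [hb2, Set.ncard_pair (by omega : (0:ℕ) ≠ w.length - b.length)]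

lemma exists_frontier {w : List A} (hn : 2 ≤ w.length) (hc : IsClosedWord w) :
    ∃ u, IsFrontier u w := by
  classical
  obtain ⟨b, hb, -⟩ := hc.resolve_left (by omega)
  have hbt : b = w.take b.length := List.prefix_iff_eq_take.mp hb.2.2.1
  set P : ℕ → Prop := fun l => IsBorder (w.take l) w with hP
  have hPb : P b.length := by rw [hP]; dsimp only; rw [← hbt]; exact hb
  have hble : b.length ≤ w.length := le_of_lt hb.2.1
  have hspec : P (Nat.findGreatest P w.length) :=
    Nat.findGreatest_spec hble hPb
  refine ⟨w.take (Nat.findGreatest P w.length), hspec, ?_⟩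
  intro v hv
  have hvt : v = w.take v.length := List.prefix_iff_eq_take.mp hv.2.2.1
  have hPv : P v.length := by rw [hP]; dsimp only; rw [← hvt]; exact hv
  have hle : v.length ≤ Nat.findGreatest P w.length :=
    Nat.le_findGreatest (le_of_lt hv.2.1) hPv
  have hfle : Nat.findGreatest P w.length ≤ w.length := Nat.findGreatest_le _
  rw [List.length_take]
  omega

lemma frontier_length_unique {w u u' : List A} (hf : IsFrontier u w) (hf' : IsFrontier u' w) :
    u.length = u'.length :=
  le_antisymm (hf'.2 u hf.1) (hf.2 u' hf'.1)

lemma frontier_step {w w' u u' : List A} {N : ℕ} (hN : 2 ≤ N)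
    (hlw : w.length = N) (hlw' : w'.length = N)
    (hvv : w.drop 1 = w'.take (N - 1))
    (hcw : IsClosedWord w) (hcw' : IsClosedWord w')
    (hf : IsFrontier u w) (hf' : IsFrontier u' w') :
    u.length = u'.length := by
  set k := u.length with hk
  set k' := u'.length with hk'
  have hk1 : 0 < k := hf.1.1
  have hkN : k < N := hlw ▸ hf.1.2.1
  have hk'1 : 0 < k' := hf'.1.1
  have hk'N : k' < N := hlw' ▸ hf'.1.2.1
  have hoccw : occSet u w = {0, N - k} := by
    rw [← hlw]; exact frontier_occSet (by omega) hcw hf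
  have hoccw' : occSet u' w' = {0, N - k'} := by
    rw [← hlw']; exact frontier_occSet (by omega) hcw' hf'
  rcases lt_trichotomy k k' with hlt | heq | hgt
  · -- k < k' : contradiction
    exfalso
    -- u' is a prefix of v := w'.take (N-1)
    have hu'v : u' <+: w'.take (N - 1) := by
      have h1 : u' = w'.take k' := List.prefix_iff_eq_take.mp hf'.1.2.2.1
      have h2 : (w'.take (N-1)).take k' = w'.take k' := by
        rw [List.take_take]; congr 1; omega
      rw [h1, ← h2]; exact List.take_prefix _ _
    -- s := u'.take (k'-1) is a prefix of v
    have hsv : u'.take (k' - 1) <+: w'.take (N - 1) :=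
      (List.take_prefix _ _).trans hu'v
    -- s is a suffix of v
    have hssv : u'.take (k' - 1) <:+ w'.take (N - 1) := by
      have h1 : u' = w'.drop (N - k') := by
        have := List.suffix_iff_eq_drop.mp hf'.1.2.2.2
        rwa [hlw', ← hk'] at this
      have h2 : u'.take (k' - 1) = (w'.take (N - 1)).drop (N - k') := by
        rw [h1, List.drop_take]
        congr 1; omega
      rw [h2]; exact List.drop_suffix _ _
    -- s occurs in w at position 1
    have hlens : (u'.take (k' - 1)).length = k' - 1 := by
      rw [List.length_take]; omega
    have hlenv : (w'.take (N-1)).length = N - 1 := by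
      rw [List.length_take]; omega
    -- u is a suffix of s
    have hsw : u'.take (k' - 1) <:+ w := by
      refine hssv.trans ?_
      rw [← hvv]; exact List.drop_suffix _ _
    have hus : u <:+ u'.take (k' - 1) := by
      refine List.suffix_of_suffix_length_le hf.1.2.2.2 hsw ?_
      rw [hlens]; omega
    -- u occurs at position k' - k in w
    have hocc : (k' - k) ∈ occSet u w := by
      have h1 : u <+: (u'.take (k' - 1)).drop ((k'-1) - k) := by
        have := List.suffix_iff_eq_drop.mp hus
        rw [hlens] at this
        rw [← this]
      have h2 : u'.take (k' - 1) <+: w.drop 1 := by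
        rw [hvv]; exact hsv
      have := occ_trans h1 h2
      have he : 1 + ((k'-1) - k) = k' - k := by omega
      rw [he] at this
      exact this
    rw [hoccw] at hocc
    rcases hocc with h | h
    · omega
    · simp only [Set.mem_singleton_iff] at h; omega
  · exact heq
  · -- k > k' : contradiction
    exfalso
    -- u is a suffix of v := w.drop 1
    have huv : u <:+ w.drop 1 := by
      refine List.suffix_of_suffix_length_le hf.1.2.2.2 (List.drop_suffix _ _) ?_
      rw [List.length_drop]; omega
    -- t := u.drop 1
    have hlent : (u.drop 1).length = k - 1 := by rw [List.length_drop]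
    -- t is a suffix of v
    have htv : u.drop 1 <:+ w.drop 1 := (List.drop_suffix _ _).trans huv
    -- t is a prefix of v
    have htpv : u.drop 1 <+: w.drop 1 := hf.1.2.2.1.drop 1
    -- v is a prefix of w'
    have hvw' : w.drop 1 <+: w' := by rw [hvv]; exact List.take_prefix _ _
    have hlenv : (w.drop 1).length = N - 1 := by rw [List.length_drop, hlw]
    -- t occurs at N - k in w'
    have htocc : u.drop 1 <+: w'.drop (N - k) := by
      have h1 : u.drop 1 <+: (w.drop 1).drop ((N-1) - (k-1)) := by
        have := List.suffix_iff_eq_drop.mp htv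
        rw [hlenv, hlent] at this
        rw [← this]
      have h2 : w.drop 1 <+: w'.drop 0 := by simpa using hvw'
      have := occ_trans h1 h2
      have he : 0 + ((N-1) - (k-1)) = N - k := by omega
      rwa [he] at this
    -- u' is a prefix of t
    have hu't : u' <+: u.drop 1 := by
      refine List.prefix_of_prefix_length_le hf'.1.2.2.1 (htpv.trans hvw') ?_
      rw [hlent]; omega
    have hocc : (N - k) ∈ occSet u' w' := hu't.trans htocc
    rw [hoccw'] at hocc
    rcases hocc with h | h
    · omega
    · simp only [Set.mem_singleton_iff] at h; omega

end FrontierAux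

/-- If `w₁`, `w₂` are closed factors of `x` of length `N` with frontiers
`u₁`, `u₂`, and there is a path from `w₁` to `w₂` in the Rauzy graph of order
`N` of `x` consisting only of closed factors, then `|u₁| = |u₂|`. -/
theorem frontier_length_eq_of_closed_path
    {A : Type*} (x : ℕ → A) (N i : ℕ) (hN : 2 ≤ N) (hi : 1 ≤ i)
    (w₁ w₂ u₁ u₂ : List A)
    (hw₁ : IsFactorOf x w₁) (hw₂ : IsFactorOf x w₂)
    (hl₁ : w₁.length = N) (hl₂ : w₂.length = N)
    (hc₁ : IsClosedWord w₁) (hc₂ : IsClosedWord w₂)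
    (hf₁ : IsFrontier u₁ w₁) (hf₂ : IsFrontier u₂ w₂)
    (z : List A) (hz : z.length = N + i)
    (hpre : w₁ <+: z) (hsuf : w₂ <:+ z)
    (hedges : ∀ u : List A, u <:+: z → u.length = N + 1 → IsFactorOf x u)
    (hclosed : ∀ u : List A, u <:+: z → u.length = N → IsClosedWord u) :
    u₁.length = u₂.length := by
  have hz1 : w₁ = z.take N := by
    have := List.prefix_iff_eq_take.mp hpre
    rwa [hl₁] at this
  have hz2 : w₂ = z.drop i := by
    have := List.suffix_iff_eq_drop.mp hsuf
    rw [hz, hl₂] at this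
    have he : N + i - N = i := by omega
    rwa [he] at this
  have hlen : ∀ j, j ≤ i → ((z.drop j).take N).length = N := by
    intro j hj
    rw [List.length_take, List.length_drop, hz]
    omega
  have hinfix : ∀ j : ℕ, ((z.drop j).take N) <:+: z := fun j =>
    (List.take_prefix _ _).isInfix.trans (List.drop_suffix _ _).isInfix
  have hcl : ∀ j, j ≤ i → IsClosedWord ((z.drop j).take N) := fun j hj =>
    hclosed _ (hinfix j) (hlen j hj)
  have key : ∀ j, j ≤ i → ∀ u, IsFrontier u ((z.drop j).take N) → u.length = u₁.length := by
    intro j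
    induction j with
    | zero =>
      intro _ u hu
      simp only [List.drop_zero] at hu
      rw [← hz1] at hu
      exact frontier_length_unique hu hf₁
    | succ j ih =>
      intro hj u hu
      obtain ⟨uj, huj⟩ := exists_frontier (by rw [hlen j (by omega)]; exact hN) (hcl j (by omega))
      have hrel : ((z.drop j).take N).drop 1 = ((z.drop (j+1)).take N).take (N - 1) := by
        rw [List.drop_take, List.take_take, List.drop_drop]
        congr 1
        omega
      have hstep := frontier_step hN (hlen j (by omega)) (hlen (j+1) hj) hrel
        (hcl j (by omega)) (hcl (j+1) hj) huj hu
      rw [← hstep]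
      exact ih (by omega) uj huj
  have hfin : (z.drop i).take N = w₂ := by
    rw [hz2]
    exact List.take_of_length_le (by rw [List.length_drop, hz]; omega)
  exact (key i le_rfl u₂ (by rw [hfin]; exact hf₂)).symm
end

section
/- Let x be an infinite word over a finite alphabet A, let k be a positive integer and let j ∈ ℕ be such that op_x(j) = k. Let u and v be the frontiers of two closed factors of x of length j (each of length at least 2), with |u| = r and |v| = p. Then |p − r| ≤ k. -/
section Words

variable {A : Type*} {u w : List A} {ℓ ℓ' : ℕ}

def HasRepeatedSuffix (w : List A) (ℓ : ℕ) : Prop :=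
  ∃ i, i + ℓ < w.length ∧ w.drop (w.length - ℓ) <+: w.drop i

def HasRepeatedPrefix (w : List A) (ℓ : ℕ) : Prop :=
  ∃ i, 0 < i ∧ i + ℓ ≤ w.length ∧ w.take ℓ <+: w.drop i

theorem HasRepeatedSuffix.mono (h : HasRepeatedSuffix w ℓ) (hℓ : ℓ' ≤ ℓ) :
    HasRepeatedSuffix w ℓ' := by
  obtain ⟨i, hi, hpre⟩ := h
  refine ⟨i + (ℓ - ℓ'), by omega, ?_⟩
  have := hpre.drop (ℓ - ℓ')
  rwa [List.drop_drop, List.drop_drop, show w.length - ℓ + (ℓ - ℓ') = w.length - ℓ' by omega]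
    at this

theorem HasRepeatedPrefix.mono (h : HasRepeatedPrefix w ℓ) (hℓ : ℓ' ≤ ℓ) :
    HasRepeatedPrefix w ℓ' := by
  obtain ⟨i, hi, hiℓ, hpre⟩ := h
  exact ⟨i, hi, by omega, (List.take_prefix_take_left hℓ).trans hpre⟩

theorem IsBorder.two_le_length (hu : IsBorder u w) : 2 ≤ w.length := by
  have := hu.1
  have := hu.2.1
  omega

theorem IsBorder.hasRepeatedSuffix (hu : IsBorder u w) : HasRepeatedSuffix w u.length := by
  obtain ⟨-, hlt, hpre, hsuf⟩ := hu
  exact ⟨0, by omega, List.suffix_iff_eq_drop.1 hsuf ▸ hpre⟩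

theorem IsBorder.hasRepeatedPrefix (hu : IsBorder u w) : HasRepeatedPrefix w u.length := by
  obtain ⟨-, hlt, hpre, hsuf⟩ := hu
  refine ⟨w.length - u.length, by omega, by omega, ?_⟩
  rw [← List.prefix_iff_eq_take.1 hpre, ← List.suffix_iff_eq_drop.1 hsuf]

theorem IsBorder.occSet_eq_pair (hu : IsBorder u w) (h2 : (occSet u w).ncard = 2) :
    occSet u w = {0, w.length - u.length} := by
  obtain ⟨hpos, hlt, hpre, hsuf⟩ := hu
  have hsub : {0, w.length - u.length} ⊆ occSet u w := by
    rintro i (rfl | rfl)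
    · simpa [occSet] using hpre
    · show u <+: w.drop (w.length - u.length)
      rw [← List.suffix_iff_eq_drop.1 hsuf]
  have hfin : (occSet u w).Finite := (Set.finite_Iic w.length).subset fun i hi => by
    have := (show u <+: w.drop i from hi).length_le
    simp only [List.length_drop, Set.mem_Iic] at this ⊢
    omega
  refine (Set.eq_of_subset_of_ncard_le hsub ?_ hfin).symm
  rw [h2, Set.ncard_pair (by omega)]

theorem IsBorder.not_hasRepeatedSuffix_succ (hu : IsBorder u w)
    (hocc : occSet u w = {0, w.length - u.length}) :
    ¬ HasRepeatedSuffix w (u.length + 1) := by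
  rintro ⟨i, hi, hpre⟩
  have hmem : i + 1 ∈ occSet u w := by
    have := hpre.drop 1
    rwa [List.drop_drop, List.drop_drop, show w.length - (u.length + 1) + 1 =
      w.length - u.length by omega, ← List.suffix_iff_eq_drop.1 hu.2.2.2] at this
  simp only [hocc, Set.mem_insert_iff, Set.mem_singleton_iff] at hmem
  omega

theorem IsBorder.not_hasRepeatedPrefix_succ (hu : IsBorder u w)
    (hocc : occSet u w = {0, w.length - u.length}) :
    ¬ HasRepeatedPrefix w (u.length + 1) := by
  rintro ⟨i, hi, hiℓ, hpre⟩
  have hmem : i ∈ occSet u w := by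
    have := (List.take_prefix_take_left (Nat.le_succ u.length)).trans hpre
    rwa [← List.prefix_iff_eq_take.1 hu.2.2.1] at this
  simp only [hocc, Set.mem_insert_iff, Set.mem_singleton_iff] at hmem
  omega

theorem IsClosedWord.exists_border_occSet_eq_pair (hc : IsClosedWord w) (hw : 2 ≤ w.length) :
    ∃ u, IsBorder u w ∧ occSet u w = {0, w.length - u.length} := by
  rcases hc with h1 | ⟨u, hu, h2⟩
  · omega
  · exact ⟨u, hu, hu.occSet_eq_pair h2⟩

theorem IsFrontier.hasRepeatedSuffix_iff (hf : IsFrontier u w) (hc : IsClosedWord w) :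
    HasRepeatedSuffix w ℓ ↔ ℓ ≤ u.length := by
  obtain ⟨b, hb, hocc⟩ := hc.exists_border_occSet_eq_pair hf.1.two_le_length
  refine ⟨fun h => ?_, hf.1.hasRepeatedSuffix.mono⟩
  by_contra! hlt
  exact hb.not_hasRepeatedSuffix_succ hocc (h.mono (by have := hf.2 b hb; omega))

theorem IsFrontier.hasRepeatedPrefix_iff (hf : IsFrontier u w) (hc : IsClosedWord w) :
    HasRepeatedPrefix w ℓ ↔ ℓ ≤ u.length := by
  obtain ⟨b, hb, hocc⟩ := hc.exists_border_occSet_eq_pair hf.1.two_le_length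
  refine ⟨fun h => ?_, hf.1.hasRepeatedPrefix.mono⟩
  by_contra! hlt
  exact hb.not_hasRepeatedPrefix_succ hocc (h.mono (by have := hf.2 b hb; omega))

end Words

section Windows

variable {A : Type*} {x : ℕ → A} {u : List A} {j n ℓ : ℕ}

def window (x : ℕ → A) (j n : ℕ) : List A := (List.range j).map fun i => x (n + i)

@[simp] theorem length_window (x : ℕ → A) (j n : ℕ) : (window x j n).length = j := by
  simp [window]

theorem IsFactorOf.exists_eq_window {w : List A} (h : IsFactorOf x w) :
    ∃ n, w = window x w.length n :=
  h

theorem isFactorOf_window (x : ℕ → A) (j n : ℕ) : IsFactorOf x (window x j n) :=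
  ⟨n, by rw [OccursAt, length_window]; rfl⟩

theorem drop_window (x : ℕ → A) (j n i : ℕ) :
    (window x j n).drop i = window x (j - i) (n + i) := by
  apply List.ext_getElem (by simp)
  intro d h₁ h₂
  simp only [window, List.getElem_drop, List.getElem_map, List.getElem_range]
  ac_rfl

theorem take_window (x : ℕ → A) {j b : ℕ} (n : ℕ) (h : b ≤ j) :
    (window x j n).take b = window x b n := by
  simp [window, ← List.map_take, List.take_range, Nat.min_eq_left h]

theorem window_prefix_window_iff {b c m m' : ℕ} :
    window x b m <+: window x c m' ↔ b ≤ c ∧ ∀ d < b, x (m + d) = x (m' + d) := by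
  constructor
  · intro h
    have hbc : b ≤ c := by simpa using h.length_le
    exact ⟨hbc, fun d hd => by simpa [window] using h.getElem (i := d) (by simpa using hd)⟩
  · rintro ⟨hbc, hagr⟩
    rw [List.prefix_iff_eq_take, length_window, take_window x m' hbc]
    apply List.ext_getElem (by simp)
    intro d h₁ h₂
    simpa [window] using hagr d (by simpa using h₁)

theorem hasRepeatedSuffix_window_iff :
    HasRepeatedSuffix (window x j n) ℓ ↔
      ∃ i, i + ℓ < j ∧ ∀ d < ℓ, x (n + (j - ℓ) + d) = x (n + i + d) := by
  simp only [HasRepeatedSuffix, length_window, drop_window, window_prefix_window_iff]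
  refine exists_congr fun i => and_congr_right fun hi => ?_
  rw [Nat.sub_sub_self (by omega)]
  exact ⟨And.right, fun h => ⟨by omega, h⟩⟩

theorem hasRepeatedPrefix_window_iff :
    HasRepeatedPrefix (window x j n) ℓ ↔
      ∃ i, 0 < i ∧ i + ℓ ≤ j ∧ ∀ d < ℓ, x (n + d) = x (n + i + d) := by
  simp only [HasRepeatedPrefix, length_window, drop_window]
  refine exists_congr fun i => and_congr_right fun _ => ?_
  constructor
  · rintro ⟨hi, h⟩
    rw [take_window x n (by omega), window_prefix_window_iff] at h
    exact ⟨hi, h.2⟩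
  · rintro ⟨hi, h⟩
    rw [take_window x n (by omega), window_prefix_window_iff]
    exact ⟨hi, by omega, h⟩

theorem HasRepeatedSuffix.of_window_succ (h : HasRepeatedSuffix (window x j (n + 1)) (ℓ + 1)) :
    HasRepeatedSuffix (window x j n) ℓ := by
  obtain ⟨i, hi, hagr⟩ := hasRepeatedSuffix_window_iff.1 h
  refine hasRepeatedSuffix_window_iff.2 ⟨i + 1, by omega, fun d hd => ?_⟩
  convert hagr d (by omega) using 2 <;> omega

theorem HasRepeatedPrefix.window_succ (h : HasRepeatedPrefix (window x j n) (ℓ + 1)) :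
    HasRepeatedPrefix (window x j (n + 1)) ℓ := by
  obtain ⟨i, hi, hiℓ, hagr⟩ := hasRepeatedPrefix_window_iff.1 h
  refine hasRepeatedPrefix_window_iff.2 ⟨i, hi, by omega, fun d hd => ?_⟩
  convert hagr (d + 1) (by omega) using 2 <;> omega

theorem IsBorder.eq_window (hu : IsBorder u (window x j n)) : u = window x u.length n :=
  (List.prefix_iff_eq_take.1 hu.2.2.1).trans (take_window x n (by simpa using hu.2.1.le))

theorem IsBorder.mem_occSet_window_iff (hu : IsBorder u (window x j n)) {i : ℕ} :
    i ∈ occSet u (window x j n) ↔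
      i + u.length ≤ j ∧ ∀ d < u.length, x (n + d) = x (n + i + d) := by
  change u <+: _ ↔ _
  nth_rewrite 1 [hu.eq_window]
  rw [drop_window, window_prefix_window_iff]
  have := hu.1
  exact and_congr_left fun _ => by omega

theorem IsBorder.not_hasRepeatedSuffix_window_succ (hu : IsBorder u (window x j n))
    (hocc : occSet u (window x j n) = {0, j - u.length}) :
    ¬ HasRepeatedSuffix (window x j (n + 1)) (u.length + 1) := by
  intro h
  obtain ⟨i, hi, hagr⟩ := hasRepeatedSuffix_window_iff.1 h
  have hlast : j - u.length ∈ occSet u (window x j n) := by simp [hocc]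
  have hnext : i + 1 ∈ occSet u (window x j n) := by
    refine hu.mem_occSet_window_iff.2 ⟨by omega, fun d hd => ?_⟩
    rw [(hu.mem_occSet_window_iff.1 hlast).2 d hd]
    convert hagr d (by omega) using 2 <;> omega
  simp only [hocc, Set.mem_insert_iff, Set.mem_singleton_iff] at hnext
  omega

theorem IsBorder.not_hasRepeatedPrefix_window_pred (hu : IsBorder u (window x j (n + 1)))
    (hocc : occSet u (window x j (n + 1)) = {0, j - u.length}) :
    ¬ HasRepeatedPrefix (window x j n) (u.length + 1) := by
  intro h
  obtain ⟨i, hi, hiℓ, hagr⟩ := hasRepeatedPrefix_window_iff.1 h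
  have hmem : i ∈ occSet u (window x j (n + 1)) := by
    refine hu.mem_occSet_window_iff.2 ⟨by omega, fun d hd => ?_⟩
    convert hagr (d + 1) (by omega) using 2 <;> omega
  simp only [hocc, Set.mem_insert_iff, Set.mem_singleton_iff] at hmem
  omega

theorem isOpenWord_window_of_hasRepeatedSuffix_succ {t : ℕ}
    (h₁ : ¬ HasRepeatedSuffix (window x j n) (t + 1))
    (h₂ : HasRepeatedSuffix (window x j (n + 1)) (t + 1)) : IsOpenWord (window x j n) := by
  have hj : 2 ≤ j := by
    obtain ⟨i, hi, -⟩ := h₂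
    simp only [length_window] at hi
    omega
  refine ⟨List.ne_nil_of_length_pos (by simp; omega), fun hc => ?_⟩
  obtain ⟨u, hu, hocc⟩ := hc.exists_border_occSet_eq_pair (by simpa using hj)
  have hut : u.length ≤ t := by
    by_contra! hlt
    exact h₁ (hu.hasRepeatedSuffix.mono hlt)
  rw [length_window] at hocc
  exact hu.not_hasRepeatedSuffix_window_succ hocc (h₂.mono (by omega))

theorem isOpenWord_window_succ_of_hasRepeatedPrefix {t : ℕ}
    (h₁ : HasRepeatedPrefix (window x j n) (t + 1))
    (h₂ : ¬ HasRepeatedPrefix (window x j (n + 1)) (t + 1)) :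
    IsOpenWord (window x j (n + 1)) := by
  have hj : 2 ≤ j := by
    obtain ⟨i, hi, hiℓ, -⟩ := h₁
    simp only [length_window] at hiℓ
    omega
  refine ⟨List.ne_nil_of_length_pos (by simp; omega), fun hc => ?_⟩
  obtain ⟨u, hu, hocc⟩ := hc.exists_border_occSet_eq_pair (by simpa using hj)
  have hut : u.length ≤ t := by
    by_contra! hlt
    exact h₂ (hu.hasRepeatedPrefix.mono hlt)
  rw [length_window] at hocc
  exact hu.not_hasRepeatedPrefix_window_pred hocc (h₁.mono (by omega))

end Windows

theorem sub_le_ncard_of_forall_threshold {β : Type*} {S : Set β} (hS : S.Finite)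
    {P : β → ℕ → Prop} (hP : ∀ w ℓ ℓ', ℓ' ≤ ℓ → P w ℓ → P w ℓ') {a b : ℕ}
    (h : ∀ t, a ≤ t → t < b → ∃ w ∈ S, P w t ∧ ¬ P w (t + 1)) : b - a ≤ S.ncard := by
  rcases le_or_gt b a with hba | hab
  · simp [Nat.sub_eq_zero_of_le hba]
  have : Nonempty β := ⟨(h a le_rfl hab).choose⟩
  choose! f hfS hf using h
  have hle : ∀ t ∈ Set.Ico a b, ∀ t' ∈ Set.Ico a b, f t = f t' → t' ≤ t := by
    intro t ht t' ht' heq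
    by_contra! hlt
    exact (hf t ht.1 ht.2).2 (heq ▸ hP _ _ _ hlt (hf t' ht'.1 ht'.2).1)
  calc b - a = (Set.Ico a b).ncard := (Set.ncard_Ico_nat a b).symm
    _ ≤ S.ncard := Set.ncard_le_ncard_of_injOn f (fun t ht => hfS t ht.1 ht.2)
        (fun t ht t' ht' heq => le_antisymm (hle t' ht' t ht heq.symm) (hle t ht t' ht' heq)) hS

section Counting

variable {A : Type*} [Finite A] {x : ℕ → A} {j m₁ m₂ r p : ℕ}

theorem finite_setOf_isOpenWord_factor (x : ℕ → A) (j : ℕ) :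
    {w : List A | w.length = j ∧ IsFactorOf x w ∧ IsOpenWord w}.Finite :=
  (List.finite_length_eq A j).subset fun _ hw => hw.1

theorem sub_le_opComp_of_hasRepeatedSuffix (hm : m₁ ≤ m₂)
    (h₁ : ¬ HasRepeatedSuffix (window x j m₁) (r + 1))
    (h₂ : HasRepeatedSuffix (window x j m₂) p) : p - r ≤ opComp x j := by
  refine sub_le_ncard_of_forall_threshold (finite_setOf_isOpenWord_factor x j)
    (P := HasRepeatedSuffix) (fun w ℓ ℓ' hℓ hw => hw.mono hℓ) fun t hrt htp => ?_
  obtain ⟨s, hs, hs'⟩ := Nat.exists_not_and_succ_of_not_zero_of_exists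
    (p := fun s => HasRepeatedSuffix (window x j (m₁ + s)) (t + 1))
    (fun h => h₁ (h.mono (by omega)))
    ⟨m₂ - m₁, by rw [Nat.add_sub_cancel' hm]; exact h₂.mono (by omega)⟩
  exact ⟨window x j (m₁ + s), ⟨length_window .., isFactorOf_window ..,
    isOpenWord_window_of_hasRepeatedSuffix_succ hs hs'⟩, hs'.of_window_succ, hs⟩

theorem sub_le_opComp_of_hasRepeatedPrefix (hm : m₁ ≤ m₂)
    (h₁ : HasRepeatedPrefix (window x j m₁) r)
    (h₂ : ¬ HasRepeatedPrefix (window x j m₂) (p + 1)) : r - p ≤ opComp x j := by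
  refine sub_le_ncard_of_forall_threshold (finite_setOf_isOpenWord_factor x j)
    (P := HasRepeatedPrefix) (fun w ℓ ℓ' hℓ hw => hw.mono hℓ) fun t hpt htr => ?_
  obtain ⟨s, hs, hs'⟩ := Nat.exists_not_and_succ_of_not_zero_of_exists
    (p := fun s => ¬ HasRepeatedPrefix (window x j (m₁ + s)) (t + 1))
    (not_not.2 (h₁.mono (by omega)))
    ⟨m₂ - m₁, by rw [Nat.add_sub_cancel' hm]; exact fun h => h₂ (h.mono (by omega))⟩
  rw [not_not] at hs
  exact ⟨window x j (m₁ + s + 1), ⟨length_window .., isFactorOf_window ..,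
    isOpenWord_window_succ_of_hasRepeatedPrefix hs hs'⟩, hs.window_succ, hs'⟩

theorem frontier_length_sub_le_opComp_of_le {u v : List A} (hm : m₁ ≤ m₂)
    (hc₁ : IsClosedWord (window x j m₁)) (hc₂ : IsClosedWord (window x j m₂))
    (hf₁ : IsFrontier u (window x j m₁)) (hf₂ : IsFrontier v (window x j m₂)) :
    v.length - u.length ≤ opComp x j ∧ u.length - v.length ≤ opComp x j :=
  ⟨sub_le_opComp_of_hasRepeatedSuffix hm
      (mt (hf₁.hasRepeatedSuffix_iff hc₁).1 (Nat.not_succ_le_self _))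
      ((hf₂.hasRepeatedSuffix_iff hc₂).2 le_rfl),
    sub_le_opComp_of_hasRepeatedPrefix hm ((hf₁.hasRepeatedPrefix_iff hc₁).2 le_rfl)
      (mt (hf₂.hasRepeatedPrefix_iff hc₂).1 (Nat.not_succ_le_self _))⟩

end Counting

theorem frontier_length_diff_le_open_complexity_general
    {A : Type*} [Fintype A] (x : ℕ → A) (k j : ℕ)
    (hop : opComp x j = k)
    (w₁ w₂ u v : List A)
    (hw₁ : IsFactorOf x w₁) (hw₂ : IsFactorOf x w₂)
    (hl₁ : w₁.length = j) (hl₂ : w₂.length = j)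
    (hc₁ : IsClosedWord w₁) (hc₂ : IsClosedWord w₂)
    (hf₁ : IsFrontier u w₁) (hf₂ : IsFrontier v w₂)
    (r p : ℕ) (hr : u.length = r) (hp : v.length = p) :
    |(p : ℤ) - (r : ℤ)| ≤ (k : ℤ) := by
  obtain ⟨m₁, hm₁⟩ := hw₁.exists_eq_window
  obtain ⟨m₂, hm₂⟩ := hw₂.exists_eq_window
  rw [hl₁] at hm₁
  rw [hl₂] at hm₂
  subst hm₁ hm₂ hr hp hop
  rw [abs_le]
  rcases le_total m₁ m₂ with hm | hm
  · have := frontier_length_sub_le_opComp_of_le hm hc₁ hc₂ hf₁ hf₂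
    omega
  · have := frontier_length_sub_le_opComp_of_le hm hc₂ hc₁ hf₂ hf₁
    omega

/-- If `op_x(j) = k` and `u`, `v` are the frontiers of two closed factors of
`x` of length `j`, with `|u| = r` and `|v| = p`, then `|p − r| ≤ k`. -/
theorem frontier_length_diff_le_open_complexity
    {A : Type*} [Fintype A] (x : ℕ → A) (k j : ℕ) (hk : 0 < k)
    (hop : opComp x j = k)
    (w₁ w₂ u v : List A)
    (hw₁ : IsFactorOf x w₁) (hw₂ : IsFactorOf x w₂)
    (hl₁ : w₁.length = j) (hl₂ : w₂.length = j)
    (h2₁ : 2 ≤ w₁.length) (h2₂ : 2 ≤ w₂.length)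
    (hc₁ : IsClosedWord w₁) (hc₂ : IsClosedWord w₂)
    (hf₁ : IsFrontier u w₁) (hf₂ : IsFrontier v w₂)
    (r p : ℕ) (hr : u.length = r) (hp : v.length = p) :
    |(p : ℤ) - (r : ℤ)| ≤ (k : ℤ) :=
  frontier_length_diff_le_open_complexity_general x k j hop w₁ w₂ u v hw₁ hw₂ hl₁ hl₂ hc₁ hc₂ hf₁
    hf₂ r p hr hp
end

section
/- Let x be an infinite word over a finite alphabet A, and suppose there exist a positive integer k and a syndetic set S ⊆ ℕ such that cl_x(n) < k for every n ∈ S. Let u be a primitive finite word such that u^n is a factor of x for every n ∈ ℕ. Then |u| < k. -/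
/-- A nonempty finite word is primitive if it is not an integer power `v^n`,
`n ≥ 2`, of any word. -/
def PrimitiveWord {A : Type*} (u : List A) : Prop :=
  u ≠ [] ∧ ∀ (v : List A) (n : ℕ), 2 ≤ n → u ≠ (List.replicate n v).flatten

/-!
Let `L = |u|` and let `p = u u u ⋯`. Since `u` is primitive, `L` is the least period of `p`: any
smaller period `d` would make `gcd d L` a proper period dividing `L`, exhibiting `u` as a power.
Pick `n ∈ S` with `n ≥ 2L`. The `L` factors of `p` of length `n` starting at `0, …, L - 1` are
factors of `x` (they lie in `u^(n+1)`), pairwise distinct, and closed: the border of length `n - L`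
occurs only at positions `0` and `L`, since an occurrence at `0 < j < L` would force the period `j`
on a window of length at least `L`, hence on all of `p`. So `L ≤ cl_x(n) < k`.
-/

open Function

section Factors

variable {A : Type*}

def factorAt (f : ℕ → A) (i n : ℕ) : List A := (List.range n).map fun t => f (i + t)

@[simp] lemma length_factorAt (f : ℕ → A) (i n : ℕ) : (factorAt f i n).length = n := by
  simp [factorAt]

@[simp] lemma getElem_factorAt (f : ℕ → A) (i n t : ℕ) (ht : t < (factorAt f i n).length) :
    (factorAt f i n)[t] = f (i + t) := by
  simp [factorAt]

lemma occursAt_iff_eq_factorAt {x : ℕ → A} {w : List A} {m : ℕ} :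
    OccursAt x w m ↔ w = factorAt x m w.length :=
  Iff.rfl

lemma factorAt_eq_factorAt_iff {f g : ℕ → A} {i j n : ℕ} :
    factorAt f i n = factorAt g j n ↔ ∀ t < n, f (i + t) = g (j + t) := by
  simp [factorAt, List.ext_getElem_iff]

lemma factorAt_add (f : ℕ → A) (i m n : ℕ) :
    factorAt f i (m + n) = factorAt f i m ++ factorAt f (i + m) n := by
  simp [factorAt, List.range_add, Nat.add_assoc]

lemma take_factorAt (f : ℕ → A) (i n k : ℕ) :
    (factorAt f i n).take k = factorAt f i (min k n) := by
  simp [factorAt, ← List.map_take, List.take_range]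

lemma drop_factorAt (f : ℕ → A) (i n k : ℕ) :
    (factorAt f i n).drop k = factorAt f (i + k) (n - k) := by
  rcases le_total k n with hk | hk
  · obtain ⟨m, rfl⟩ := Nat.exists_eq_add_of_le hk
    rw [factorAt_add, List.drop_left' (length_factorAt f i k), Nat.add_sub_cancel_left]
  · rw [List.drop_eq_nil_of_le (by simpa using hk), Nat.sub_eq_zero_of_le hk]
    rfl

lemma factorAt_prefix_factorAt (f : ℕ → A) (i : ℕ) {k n : ℕ} (hkn : k ≤ n) :
    factorAt f i k <+: factorAt f i n := by
  simpa [take_factorAt, hkn] using List.take_prefix k (factorAt f i n)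

lemma Function.Periodic.factorAt_add_period {f : ℕ → A} {c : ℕ} (hf : Periodic f c)
    (i n : ℕ) : factorAt f (i + c) n = factorAt f i n :=
  factorAt_eq_factorAt_iff.2 fun t _ => by rw [Nat.add_right_comm, hf]

end Factors

section Periods

variable {A : Type*}

lemma Function.Periodic.nat_gcd {f : ℕ → A} {a b : ℕ} (ha : Periodic f a)
    (hb : Periodic f b) : Periodic f (a.gcd b) := by
  induction a, b using Nat.gcd.induction with
  | H0 b => simpa using hb
  | H1 a b _ ih =>
    rw [Nat.gcd_rec]
    refine ih (fun m => ?_) ha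
    have hq := ha.nat_mul (b / a) (m + b % a)
    rw [Nat.cast_id, Nat.add_assoc, mul_comm, Nat.mod_add_div, hb] at hq
    exact hq.symm

lemma Function.Periodic.eq_of_forall_lt {f g : ℕ → A} {c i : ℕ} (hf : Periodic f c)
    (hg : Periodic g c) (hc : 0 < c) (h : ∀ t < c, f (i + t) = g (i + t)) : f = g := by
  -- shift `m` by `i * c` to get past `i`, then reduce modulo `c` into `[i, i + c)`
  have reduce : ∀ h : ℕ → A, Periodic h c → ∀ m, h m = h (i + (m + i * c - i) % c) := by
    intro h hh m
    have hic : i ≤ i * c := Nat.le_mul_of_pos_right i hc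
    have hm := hh.nat_mul i m
    have hr := hh.nat_mul ((m + i * c - i) / c) (i + (m + i * c - i) % c)
    rw [Nat.cast_id] at hm hr
    rw [← hm, ← hr, Nat.add_assoc, Nat.mod_add_div']
    congr 1
    omega
  funext m
  rw [reduce f hf, reduce g hg]
  exact h _ (Nat.mod_lt _ hc)

lemma Function.Periodic.periodic_of_factorAt_eq {f : ℕ → A} {c i d n : ℕ} (hf : Periodic f c)
    (hc : 0 < c) (hcn : c ≤ n) (h : factorAt f (i + d) n = factorAt f i n) : Periodic f d := by
  have hwin := factorAt_eq_factorAt_iff.1 h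
  refine congrFun ((hf.add_const d).eq_of_forall_lt (i := i) hf hc fun t ht => ?_)
  simpa [Nat.add_right_comm] using hwin t (by omega)

structure HasLeastPeriod (f : ℕ → A) (c : ℕ) : Prop where
  pos : 0 < c
  periodic : Periodic f c
  le_of_periodic : ∀ d, 0 < d → Periodic f d → c ≤ d

namespace HasLeastPeriod

variable {f : ℕ → A} {c n : ℕ}

lemma factorAt_add_ne (hf : HasLeastPeriod f c) (hn : c ≤ n) (i : ℕ) {j : ℕ} (hj : 0 < j)
    (hjc : j < c) : factorAt f (i + j) n ≠ factorAt f i n := fun h =>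
  (hf.le_of_periodic j hj (hf.periodic.periodic_of_factorAt_eq hf.pos hn h)).not_gt hjc

lemma injOn_factorAt (hf : HasLeastPeriod f c) (hn : c ≤ n) :
    Set.InjOn (factorAt f · n) (Set.Iio c) := by
  intro i hi j hj h
  simp only [Set.mem_Iio] at hi hj
  by_contra hij
  rcases Nat.lt_or_gt_of_ne hij with hij | hij
  · exact hf.factorAt_add_ne hn i (j := j - i) (by omega) (by omega)
      (by rw [Nat.add_sub_cancel' hij.le]; exact h.symm)
  · exact hf.factorAt_add_ne hn j (j := i - j) (by omega) (by omega)
      (by rw [Nat.add_sub_cancel' hij.le]; exact h)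

lemma isBorder_factorAt (hf : HasLeastPeriod f c) (hn : 2 * c ≤ n) (i : ℕ) :
    IsBorder (factorAt f i (n - c)) (factorAt f i n) := by
  have := hf.pos
  refine ⟨by simp only [length_factorAt]; omega, by simp only [length_factorAt]; omega,
    factorAt_prefix_factorAt f i (Nat.sub_le n c), ?_⟩
  rw [← hf.periodic.factorAt_add_period, ← drop_factorAt]
  exact List.drop_suffix c _

lemma occSet_factorAt (hf : HasLeastPeriod f c) (hn : 2 * c ≤ n) (i : ℕ) :
    occSet (factorAt f i (n - c)) (factorAt f i n) = {0, c} := by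
  have := hf.pos
  ext j
  simp only [occSet, Set.mem_ofPred_eq, Set.mem_insert_iff, Set.mem_singleton_iff,
    drop_factorAt]
  constructor
  · intro hj
    have hjc : j ≤ c := by have := hj.length_le; simp only [length_factorAt] at this; omega
    rw [List.prefix_iff_eq_take, take_factorAt, length_factorAt,
      min_eq_left (by omega)] at hj
    by_contra hj0
    exact hf.factorAt_add_ne (by omega) i (j := j) (by omega) (by omega) hj.symm
  · rintro (rfl | rfl)
    · exact factorAt_prefix_factorAt f i (by omega)
    · rw [hf.periodic.factorAt_add_period]

lemma isClosedWord_factorAt (hf : HasLeastPeriod f c) (hn : 2 * c ≤ n) (i : ℕ) :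
    IsClosedWord (factorAt f i n) := by
  refine Or.inr ⟨_, hf.isBorder_factorAt hn i, ?_⟩
  rw [hf.occSet_factorAt hn i, Set.ncard_pair (by have := hf.pos; omega)]

end HasLeastPeriod

end Periods

section Words

variable {A : Type*}

def periodicExt (u : List A) (hu : u ≠ []) (m : ℕ) : A :=
  u[m % u.length]'(Nat.mod_lt _ (List.length_pos_iff.2 hu))

lemma periodic_periodicExt (u : List A) (hu : u ≠ []) : Periodic (periodicExt u hu) u.length :=
  fun m => by simp [periodicExt]

lemma factorAt_periodicExt_zero (u : List A) (hu : u ≠ []) :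
    factorAt (periodicExt u hu) 0 u.length = u :=
  List.ext_getElem (by simp) fun t ht _ => by simp_all [periodicExt, Nat.mod_eq_of_lt]

lemma flatten_replicate_eq_factorAt (u : List A) (hu : u ≠ []) (N : ℕ) :
    (List.replicate N u).flatten = factorAt (periodicExt u hu) 0 (N * u.length) := by
  induction N with
  | zero => simp [factorAt]
  | succ N ih =>
    rw [List.replicate_succ, List.flatten_cons, ih, Nat.succ_mul, Nat.add_comm, factorAt_add,
      factorAt_periodicExt_zero, Nat.zero_add, ← Nat.zero_add u.length,
      (periodic_periodicExt u hu).factorAt_add_period]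

lemma periodicExt_take {u : List A} (hu : u ≠ []) {g : ℕ} (hg : 0 < g) (hgu : g ≤ u.length)
    (hper : Periodic (periodicExt u hu) g) :
    periodicExt (u.take g) (List.ne_nil_of_length_pos (by rwa [List.length_take_of_le hgu]))
      = periodicExt u hu := by
  funext m
  have hm : m % g < g := Nat.mod_lt _ hg
  rw [← hper.map_mod_nat m]
  simp [periodicExt, Nat.min_eq_left hgu, Nat.mod_eq_of_lt (hm.trans_le hgu)]

lemma PrimitiveWord.hasLeastPeriod_periodicExt {u : List A} (hu : PrimitiveWord u) :
    HasLeastPeriod (periodicExt u hu.1) u.length := by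
  refine ⟨List.length_pos_iff.2 hu.1, periodic_periodicExt u hu.1, fun d hd hper => ?_⟩
  by_contra! hdu
  set g := d.gcd u.length
  have hgper : Periodic (periodicExt u hu.1) g := hper.nat_gcd (periodic_periodicExt u hu.1)
  have hg : 0 < g := Nat.gcd_pos_of_pos_left _ hd
  have hgu : g < u.length := (Nat.le_of_dvd hd (Nat.gcd_dvd_left _ _)).trans_lt hdu
  obtain ⟨q, hq⟩ := Nat.gcd_dvd_right d u.length
  refine hu.2 (u.take g) q ?_ ?_
  · by_contra! hq2
    interval_cases q <;> omega
  · have htake : (u.take g).length = g := List.length_take_of_le hgu.le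
    rw [flatten_replicate_eq_factorAt _ (List.ne_nil_of_length_pos (by omega)),
      periodicExt_take hu.1 hg hgu.le hgper, htake, Nat.mul_comm, ← hq, factorAt_periodicExt_zero]

lemma IsFactorOf.factorAt_periodicExt {x : ℕ → A} {u : List A} (hu : u ≠ []) {N i n : ℕ}
    (h : IsFactorOf x (List.replicate N u).flatten) (hin : i + n ≤ N * u.length) :
    IsFactorOf x (factorAt (periodicExt u hu) i n) := by
  obtain ⟨m, hm⟩ := h
  rw [occursAt_iff_eq_factorAt, flatten_replicate_eq_factorAt u hu, length_factorAt,
    factorAt_eq_factorAt_iff] at hm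
  refine ⟨m + i, occursAt_iff_eq_factorAt.2 ?_⟩
  rw [length_factorAt, factorAt_eq_factorAt_iff]
  intro t ht
  simpa [Nat.add_assoc] using hm (i + t) (by omega)

lemma le_clComp_of_injOn [Finite A] {x : ℕ → A} {n L : ℕ} {w : ℕ → List A}
    (hw : Set.InjOn w (Set.Iio L))
    (hcl : ∀ i < L, (w i).length = n ∧ IsFactorOf x (w i) ∧ IsClosedWord (w i)) :
    L ≤ clComp x n :=
  calc L = (w '' Set.Iio L).ncard := by
        rw [hw.ncard_image, ← Finset.coe_range, Set.ncard_coe_finset, Finset.card_range]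
    _ ≤ clComp x n := Set.ncard_le_ncard (by rintro _ ⟨i, hi, rfl⟩; exact hcl i hi)
      ((List.finite_length_eq A n).subset fun _ hw => hw.1)

end Words

theorem primitive_period_short_of_closed_bounded_general
    {A : Type*} [Fintype A] (x : ℕ → A) (k : ℕ)
    (S : Set ℕ) (hS : Syndetic S) (hcl : ∀ n ∈ S, clComp x n < k)
    (u : List A) (hu : PrimitiveWord u)
    (hpow : ∀ n : ℕ, IsFactorOf x (List.replicate n u).flatten) :
    u.length < k := by
  obtain ⟨d, hd⟩ := hS
  obtain ⟨n, hnS, hn, -⟩ := hd (2 * u.length)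
  have hp := hu.hasLeastPeriod_periodicExt
  refine (le_clComp_of_injOn (hp.injOn_factorAt (by omega)) fun i hi =>
    ⟨length_factorAt _ i n, (hpow (n + 1)).factorAt_periodicExt hu.1 ?_,
      hp.isClosedWord_factorAt hn i⟩).trans_lt (hcl n hnS)
  nlinarith

/-- If `cl_x < k` on a syndetic set `S` and `u` is a primitive word all of
whose powers are factors of `x`, then `|u| < k`. -/
theorem primitive_period_short_of_closed_bounded
    {A : Type*} [Fintype A] (x : ℕ → A) (k : ℕ) (hk : 0 < k)
    (S : Set ℕ) (hS : Syndetic S) (hcl : ∀ n ∈ S, clComp x n < k)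
    (u : List A) (hu : PrimitiveWord u)
    (hpow : ∀ n : ℕ, IsFactorOf x (List.replicate n u).flatten) :
    u.length < k :=
  primitive_period_short_of_closed_bounded_general x k S hS hcl u hu hpow
end
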